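/- The following are equivalent: (1) C is mp; (2) for all compact a,b ∈ C, [a,b] ≤ ρ(⊥) implies (a → ρ(⊥)) ⊔ (b → ρ(⊥)) = ⊤; (3) for all compact a,b ∈ C, (a → ρ(⊥)) ⊔ (b → ρ(⊥)) = [a,b] → ρ(⊥); (4) for every compact a ∈ C, the element a → ρ(⊥) is w-pure. -/

import Mathlib

open CompleteLattice

/-- A complete lattice equipped with a commutator operation, axiomatizing the congruence
lattice of an algebra in a semidegenerate congruence-modular variety whose compact
congruences are closed under the commutator. -/
class CommutatorLattice (C : Type*) [CompleteLattice C] where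
  comm : C → C → C
  comm_comm : ∀ a b : C, comm a b = comm b a
  comm_sSup : ∀ (s : Set C) (b : C), comm (sSup s) b = ⨆ a ∈ s, comm a b
  comm_le_inf : ∀ a b : C, comm a b ≤ a ⊓ b
  comm_top : ∀ a : C, comm a ⊤ = a
  compactlyGenerated : ∀ x : C,
    ∃ s : Set C, (∀ a ∈ s, IsCompactElement a) ∧ sSup s = x
  top_isCompact : IsCompactElement (⊤ : C)
  comm_isCompact : ∀ a b : C, IsCompactElement a → IsCompactElement b →
    IsCompactElement (comm a b)

namespace CommutatorLattice

variable {C : Type*} [CompleteLattice C] [CommutatorLattice C]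

/-- The residuation `a → b := ⨆ {c | [a,c] ≤ b}`. -/
def resid (a b : C) : C := sSup {c : C | comm a c ≤ b}

/-- The annihilator `a⊥ := a → ⊥`. -/
def ann (a : C) : C := resid a ⊥

/-- Iterated commutator: `cpow a n = [a,a]^n`, with the convention `[a,a]^0 = a`.
Note that `[a,b]^n` for `n ≥ 1` equals `cpow (comm a b) (n-1)`. -/
def cpow (a : C) : ℕ → C
  | 0 => a
  | n + 1 => comm (cpow a n) (cpow a n)

/-- Prime elements: `p ≠ ⊤` and `[a,b] ≤ p` implies `a ≤ p` or `b ≤ p`. -/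
def IsPrime (p : C) : Prop := p ≠ ⊤ ∧ ∀ a b : C, comm a b ≤ p → a ≤ p ∨ b ≤ p

/-- The radical `ρ(a) := ⨅ {p prime | a ≤ p}`. -/
def radical (a : C) : C := sInf {p : C | IsPrime p ∧ a ≤ p}

variable (C) in
/-- `C` is semiprime if `ρ(⊥) = ⊥`. -/
def Semiprime : Prop := radical (⊥ : C) = ⊥

variable (C) in
/-- Condition (⋆): for all compact `a`, `b` and all `n ≥ 1` there is `m ≥ 0` with
`[[a,a]^m, [b,b]^m] ≤ [a,b]^n`.  Here `cpow (comm a b) n = [a,b]^(n+1)`, so `n : ℕ`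
ranges exactly over the exponents `≥ 1` of the paper. -/
def Star : Prop := ∀ a b : C, IsCompactElement a → IsCompactElement b →
  ∀ n : ℕ, ∃ m : ℕ, comm (cpow a m) (cpow b m) ≤ cpow (comm a b) n

/-- Pure elements: `t ⊔ a⊥ = ⊤` for every compact `a ≤ t`. -/
def IsPure (t : C) : Prop := ∀ a : C, IsCompactElement a → a ≤ t → t ⊔ ann a = ⊤

/-- w-pure elements: `t ⊔ (a → ρ(⊥)) = ⊤` for every compact `a ≤ t`. -/
def IsWPure (t : C) : Prop :=
  ∀ a : C, IsCompactElement a → a ≤ t → t ⊔ resid a (radical ⊥) = ⊤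

/-- Complemented elements. -/
def IsComplEl (a : C) : Prop := ∃ b : C, a ⊔ b = ⊤ ∧ a ⊓ b = ⊥

/-- Regular elements: joins of sets of complemented elements. -/
def IsRegular (t : C) : Prop := ∃ S : Set C, (∀ a ∈ S, IsComplEl a) ∧ t = sSup S

/-- Max-regular elements: maximal among regular elements distinct from `⊤`. -/
def IsMaxRegular (t : C) : Prop :=
  IsRegular t ∧ t ≠ ⊤ ∧ ∀ u : C, IsRegular u → u ≠ ⊤ → t ≤ u → u = t

/-- Maximal elements of `C \ {⊤}`. -/
def IsMaximal (p : C) : Prop := p ≠ ⊤ ∧ ∀ q : C, q ≠ ⊤ → p ≤ q → q = p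

/-- Minimal primes. -/
def IsMinPrime (p : C) : Prop := IsPrime p ∧ ∀ q : C, IsPrime q → q ≤ p → q = p

variable (C) in
/-- `C` is mp if every prime lies above a unique minimal prime. -/
def MP : Prop := ∀ p : C, IsPrime p → ∃! q : C, IsMinPrime q ∧ q ≤ p

variable (C) in
/-- `C` is PF if `a⊥` is pure for every compact `a`. -/
def PF : Prop := ∀ a : C, IsCompactElement a → IsPure (ann a)

variable (C) in
/-- `C` is PP if `a⊥` is complemented for every compact `a`. -/
def PP : Prop := ∀ a : C, IsCompactElement a → IsComplEl (ann a)

/-- `O(p) := ⨆ {a compact | a⊥ ≰ p}`. -/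
def O (p : C) : C := sSup {a : C | IsCompactElement a ∧ ¬ ann a ≤ p}

variable (C) in
/-- `C` is normal. -/
def Normal : Prop := ∀ t u : C, t ⊔ u = ⊤ →
  ∃ a b : C, t ⊔ a = ⊤ ∧ u ⊔ b = ⊤ ∧ comm a b = ⊥

variable (C) in
/-- `C` is B-normal. -/
def BNormal : Prop := ∀ t u : C, t ⊔ u = ⊤ →
  ∃ a b : C, IsComplEl a ∧ IsComplEl b ∧ t ⊔ a = ⊤ ∧ u ⊔ b = ⊤ ∧ comm a b = ⊥

variable (C) in
/-- `C` is purified. -/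
def Purified : Prop := ∀ p q : C, IsMinPrime p → IsMinPrime q → p ≠ q →
  ∃ a : C, IsComplEl a ∧ a ≤ p ∧ ann a ≤ q

variable (C) in
/-- The prime spectrum of `C`. -/
abbrev Spec := {p : C // IsPrime p}

variable (C) in
/-- The Zariski topology on `Spec C`: the closed sets are the `V(t) = {p | t ≤ p}`,
equivalently the topology generated by the sets `D(t) = {p | t ≰ p}`. -/
def zariskiTop : TopologicalSpace (Spec C) :=
  TopologicalSpace.generateFrom {U : Set (Spec C) | ∃ t : C, U = {p : Spec C | ¬ t ≤ p.1}}

variable (C) in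
/-- The flat topology on `Spec C`: generated by the open basis `V(a)`, `a` compact. -/
def flatTop : TopologicalSpace (Spec C) :=
  TopologicalSpace.generateFrom
    {U : Set (Spec C) | ∃ a : C, IsCompactElement a ∧ U = {p : Spec C | a ≤ p.1}}

/-!
Modulo `ρ(⊥)` the commutator behaves like the meet: `[x,y] ≤ ρ(⊥) ↔ x ⊓ y ≤ ρ(⊥)`. Hence
`a → ρ(⊥)` is the pseudocomplement of `a` relative to `ρ(⊥)`, and, as for annihilators in a
reduced ring, a compact `a` lies in a minimal prime `q` iff `a → ρ(⊥) ≰ q`; the nontrivial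
direction is the m-system argument, applied to the commutator-closure of `a` and of the compact
elements not below a prime `p ≥ a → ρ(⊥)`.

Two distinct minimal primes `q₁, q₂` below a prime `p` are then separated by compacts `a ≤ q₁`,
`b ≤ a → ρ(⊥)` with `a ≰ q₂`, `b ≰ q₁`, whose relative annihilators lie in `q₂` and `q₁`, so
they cannot be comaximal although `[a,b] ≤ ρ(⊥)`; conversely, comaximality can only fail inside
some prime `p`, and the minimal primes below `p` avoiding `a` and `b` must differ. For (3), a
compact `c ≤ [a,b] → ρ(⊥) = (a ⊓ b) → ρ(⊥)` is split along the comaximal pair `[a,c] → ρ(⊥)`,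
`b → ρ(⊥)`; (4) is a restatement of (2).
-/

theorem _root_.exists_isCompactElement_le_not_le {α : Type*} [CompleteLattice α]
    [IsCompactlyGenerated α] {x y : α} (h : ¬ x ≤ y) :
    ∃ c : α, IsCompactElement c ∧ c ≤ x ∧ ¬ c ≤ y := by
  by_contra! hc
  exact h (le_iff_compact_le_imp.2 hc)

instance : IsCompactlyGenerated C := ⟨compactlyGenerated⟩

theorem comm_sup_left (a b c : C) : comm (a ⊔ b) c = comm a c ⊔ comm b c := by
  rw [← sSup_pair, comm_sSup, iSup_insert, iSup_singleton]

theorem comm_sup_right (a b c : C) : comm a (b ⊔ c) = comm a b ⊔ comm a c := by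
  rw [comm_comm, comm_sup_left, comm_comm b, comm_comm c]

theorem comm_mono_left {a b : C} (h : a ≤ b) (c : C) : comm a c ≤ comm b c :=
  calc comm a c ≤ comm a c ⊔ comm b c := le_sup_left
    _ = comm b c := by rw [← comm_sup_left, sup_eq_right.2 h]

theorem comm_mono {a b c d : C} (hab : a ≤ b) (hcd : c ≤ d) : comm a c ≤ comm b d :=
  calc comm a c ≤ comm b c := comm_mono_left hab c
    _ = comm c b := comm_comm b c
    _ ≤ comm d b := comm_mono_left hcd b
    _ = comm b d := comm_comm d b

theorem comm_sup_sup_le {q u v : C} (h : comm u v ≤ q) : comm (q ⊔ u) (q ⊔ v) ≤ q := by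
  rw [comm_sup_left, comm_sup_right, comm_sup_right]
  exact sup_le (sup_le ((comm_le_inf _ _).trans inf_le_left) ((comm_le_inf _ _).trans inf_le_left))
    (sup_le ((comm_le_inf _ _).trans inf_le_right) h)

theorem le_resid_iff {a b c : C} : c ≤ resid a b ↔ comm a c ≤ b := by
  refine ⟨fun h => (comm_mono le_rfl h).trans ?_, fun h => le_sSup h⟩
  rw [comm_comm, resid, comm_sSup]
  exact iSup₂_le fun x hx => (comm_comm x a).trans_le hx

theorem IsPrime.radical_bot_le {p : C} (hp : IsPrime p) : radical ⊥ ≤ p :=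
  sInf_le ⟨hp, bot_le⟩

theorem le_radical (a : C) : a ≤ radical a :=
  le_sInf fun _ hp => hp.2

theorem radical_le_radical_bot {w : C} (h : w ≤ radical ⊥) : radical w ≤ radical ⊥ :=
  le_sInf fun _ hp => sInf_le ⟨hp.1, h.trans (IsPrime.radical_bot_le hp.1)⟩

theorem radical_inf_le_radical_comm (u v : C) : radical u ⊓ radical v ≤ radical (comm u v) :=
  le_sInf fun _ ⟨hq, huv⟩ => (hq.2 u v huv).elim
    (fun hu => inf_le_left.trans (sInf_le ⟨hq, hu⟩))
    (fun hv => inf_le_right.trans (sInf_le ⟨hq, hv⟩))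

theorem IsPrime.le_or_resid_le {p : C} (hp : IsPrime p) (a : C) :
    a ≤ p ∨ resid a (radical ⊥) ≤ p :=
  hp.2 _ _ ((le_resid_iff.1 le_rfl).trans hp.radical_bot_le)

theorem le_radical_bot_of_comm_self_le {z : C} (h : comm z z ≤ radical ⊥) : z ≤ radical ⊥ :=
  le_sInf fun _ hp => (hp.1.2 z z (h.trans (IsPrime.radical_bot_le hp.1))).elim id id

theorem comm_inf_le_radical_bot_iff {a b c : C} :
    comm a b ⊓ c ≤ radical ⊥ ↔ a ⊓ b ⊓ c ≤ radical ⊥ := by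
  refine ⟨fun h => le_radical_bot_of_comm_self_le (le_trans ?_ h),
    le_trans (inf_le_inf_right c (comm_le_inf a b))⟩
  exact le_inf (comm_mono (inf_le_left.trans inf_le_left) (inf_le_left.trans inf_le_right))
    ((comm_le_inf _ _).trans (inf_le_left.trans inf_le_right))

theorem comm_le_radical_bot_iff {a b : C} : comm a b ≤ radical ⊥ ↔ a ⊓ b ≤ radical ⊥ := by
  rw [← inf_top_eq (comm a b), comm_inf_le_radical_bot_iff, inf_top_eq]

theorem le_resid_radical_bot_iff {a c : C} : c ≤ resid a (radical ⊥) ↔ a ⊓ c ≤ radical ⊥ :=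
  le_resid_iff.trans comm_le_radical_bot_iff

theorem resid_comm_radical_bot (a b : C) :
    resid (comm a b) (radical ⊥) = resid (a ⊓ b) (radical ⊥) :=
  eq_of_forall_le_iff fun c => by
    rw [le_resid_radical_bot_iff, le_resid_radical_bot_iff, comm_inf_le_radical_bot_iff]

theorem resid_radical_bot_anti {a b : C} (h : a ≤ b) :
    resid b (radical ⊥) ≤ resid a (radical ⊥) :=
  le_resid_radical_bot_iff.2 ((inf_le_inf_right _ h).trans (le_resid_radical_bot_iff.1 le_rfl))

/-- The m-system argument: a maximal element avoiding a commutator-closed set of compacts is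
prime. -/
theorem exists_isPrime_ge_of_forall_not_le {S : Set C} (hS : ∀ s ∈ S, IsCompactElement s)
    (hmul : ∀ s ∈ S, ∀ t ∈ S, comm s t ∈ S) (hne : S.Nonempty) {x : C}
    (hx : ∀ s ∈ S, ¬ s ≤ x) : ∃ q : C, IsPrime q ∧ x ≤ q ∧ ∀ s ∈ S, ¬ s ≤ q := by
  have hchain : ∀ c ⊆ {y : C | ∀ s ∈ S, ¬ s ≤ y}, IsChain (· ≤ ·) c → ∀ y ∈ c,
      ∃ ub ∈ {y : C | ∀ s ∈ S, ¬ s ≤ y}, ∀ z ∈ c, z ≤ ub := by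
    intro c hc hchain y hy
    refine ⟨sSup c, fun s hs hle => ?_, fun z hz => le_sSup hz⟩
    obtain ⟨z, hz, hsz⟩ := (isCompactElement_iff_le_of_directed_sSup_le C s).1 (hS s hs) c
      ⟨y, hy⟩ hchain.directedOn hle
    exact hc hz s hs hsz
  obtain ⟨q, hxq, hq⟩ := zorn_le_nonempty₀ {y : C | ∀ s ∈ S, ¬ s ≤ y} hchain x hx
  have hmeet : ∀ u : C, ¬ u ≤ q → ∃ s ∈ S, s ≤ q ⊔ u := fun u hu => by
    by_contra! h
    exact hu (le_sup_right.trans (hq.2 h le_sup_left))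
  refine ⟨q, ⟨fun htop => ?_, fun u v huv => ?_⟩, hxq, hq.1⟩
  · obtain ⟨s, hs⟩ := hne
    exact hq.1 s hs (htop ▸ le_top)
  · by_contra! h
    obtain ⟨s, hs, hsu⟩ := hmeet u h.1
    obtain ⟨t, ht, htv⟩ := hmeet v h.2
    exact hq.1 _ (hmul s hs t ht) ((comm_mono hsu htv).trans (comm_sup_sup_le huv))

theorem exists_isPrime_ge {x : C} (hx : x ≠ ⊤) : ∃ p : C, IsPrime p ∧ x ≤ p := by
  obtain ⟨p, hp, hxp, -⟩ := exists_isPrime_ge_of_forall_not_le (S := {(⊤ : C)})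
    (by simpa using top_isCompact) (by simp [comm_top]) (Set.singleton_nonempty _)
    (by simpa using hx)
  exact ⟨p, hp, hxp⟩

theorem isPrime_sInf_of_isChain {T : Set C} (hc : IsChain (· ≤ ·) T) (hne : T.Nonempty)
    (hT : ∀ q ∈ T, IsPrime q) : IsPrime (sInf T) := by
  obtain ⟨y, hy⟩ := hne
  refine ⟨fun h => (hT y hy).1 (top_le_iff.1 (h ▸ sInf_le hy)), fun u v huv => ?_⟩
  simp only [le_sInf_iff]
  by_contra! h
  obtain ⟨⟨q₁, hq₁, hu⟩, ⟨q₂, hq₂, hv⟩⟩ := h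
  rcases hc.total hq₁ hq₂ with h12 | h21
  · exact ((hT q₁ hq₁).2 u v ((huv.trans (sInf_le hq₁)))).elim hu fun h => hv (h.trans h12)
  · exact ((hT q₂ hq₂).2 u v ((huv.trans (sInf_le hq₂)))).elim (fun h => hu (h.trans h21)) hv

theorem exists_isMinPrime_le {p : C} (hp : IsPrime p) : ∃ q : C, IsMinPrime q ∧ q ≤ p := by
  obtain ⟨q, hqp, hq⟩ := zorn_le_nonempty₀ (α := Cᵒᵈ) {q | IsPrime (OrderDual.ofDual q)}
    (fun c hc hchain y hy => ⟨sSup c, isPrime_sInf_of_isChain hchain.symm ⟨y, hy⟩ hc,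
      fun _ hz => le_sSup hz⟩) (OrderDual.toDual p) hp
  exact ⟨OrderDual.ofDual q, ⟨hq.1, fun q' hq' hle => (hq.eq_of_le hq' hle).symm⟩, hqp⟩

theorem exists_isMinPrime_le_not_le {p a : C} (hp : IsPrime p) (ha : IsCompactElement a)
    (hra : resid a (radical ⊥) ≤ p) : ∃ q : C, IsMinPrime q ∧ q ≤ p ∧ ¬ a ≤ q := by
  set S : Set C := {w | IsCompactElement w ∧
    ∃ d : C, IsCompactElement d ∧ ¬ d ≤ p ∧ a ⊓ d ≤ radical w}
  have hmul : ∀ s ∈ S, ∀ t ∈ S, comm s t ∈ S := by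
    rintro s ⟨hs, d, hd, hdp, hsd⟩ t ⟨ht, e, he, hep, hte⟩
    refine ⟨comm_isCompact s t hs ht, comm d e, comm_isCompact d e hd he,
      fun h => (hp.2 d e h).elim hdp hep, ?_⟩
    calc a ⊓ comm d e ≤ (a ⊓ d) ⊓ (a ⊓ e) := by
          have := comm_le_inf d e
          exact le_inf (inf_le_inf_left a (this.trans inf_le_left))
            (inf_le_inf_left a (this.trans inf_le_right))
      _ ≤ radical s ⊓ radical t := inf_le_inf hsd hte
      _ ≤ radical (comm s t) := radical_inf_le_radical_comm s t
  have haS : a ∈ S :=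
    ⟨ha, ⊤, top_isCompact, fun h => hp.1 (top_le_iff.1 h), inf_le_left.trans (le_radical a)⟩
  have hbot : ∀ s ∈ S, ¬ s ≤ radical ⊥ := by
    rintro s ⟨-, d, -, hdp, hsd⟩ hs
    exact hdp ((le_resid_radical_bot_iff.2 (hsd.trans (radical_le_radical_bot hs))).trans hra)
  obtain ⟨q, hq, -, hqS⟩ :=
    exists_isPrime_ge_of_forall_not_le (fun s hs => hs.1) hmul ⟨a, haS⟩ hbot
  have hqp : q ≤ p := le_iff_compact_le_imp.2 fun k hk hkq => by
    by_contra hkp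
    exact hqS k ⟨hk, k, hk, hkp, inf_le_right.trans (le_radical k)⟩ hkq
  obtain ⟨q', hq', hq'q⟩ := exists_isMinPrime_le hq
  exact ⟨q', hq', hq'q.trans hqp, fun haq' => hqS a haS (haq'.trans hq'q)⟩

theorem IsMinPrime.resid_le_iff {q a : C} (hq : IsMinPrime q) (ha : IsCompactElement a) :
    resid a (radical ⊥) ≤ q ↔ ¬ a ≤ q := by
  refine ⟨fun h => ?_, (hq.1.le_or_resid_le a).resolve_left⟩
  obtain ⟨q', hq', hq'q, haq'⟩ := exists_isMinPrime_le_not_le hq.1 ha h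
  rwa [hq.2 q' hq'.1 hq'q] at haq'

theorem IsMinPrime.not_le_of_ne {q₁ q₂ : C} (hq₁ : IsMinPrime q₁) (hq₂ : IsMinPrime q₂)
    (hne : q₁ ≠ q₂) : ¬ q₁ ≤ q₂ :=
  fun h => hne (hq₂.2 q₁ hq₁.1 h)

variable (C) in
def RadicalAnnihilatorsComaximal : Prop :=
  ∀ a b : C, IsCompactElement a → IsCompactElement b → comm a b ≤ radical ⊥ →
    resid a (radical ⊥) ⊔ resid b (radical ⊥) = ⊤

theorem RadicalAnnihilatorsComaximal.of_mp (h : MP C) : RadicalAnnihilatorsComaximal C := by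
  intro a b ha hb hab
  by_contra hne
  obtain ⟨p, hp, hle⟩ := exists_isPrime_ge hne
  obtain ⟨q₁, hq₁, hq₁p, haq₁⟩ := exists_isMinPrime_le_not_le hp ha (le_sup_left.trans hle)
  obtain ⟨q₂, hq₂, hq₂p, hbq₂⟩ := exists_isMinPrime_le_not_le hp hb (le_sup_right.trans hle)
  obtain rfl : q₁ = q₂ := (h p hp).unique ⟨hq₁, hq₁p⟩ ⟨hq₂, hq₂p⟩
  exact (hq₁.1.2 a b (hab.trans (IsPrime.radical_bot_le hq₁.1))).elim haq₁ hbq₂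

theorem RadicalAnnihilatorsComaximal.mp (h : RadicalAnnihilatorsComaximal C) : MP C := by
  intro p hp
  obtain ⟨q, hq, hqp⟩ := exists_isMinPrime_le hp
  refine ⟨q, ⟨hq, hqp⟩, fun q' ⟨hq', hq'p⟩ => by_contra fun hne => ?_⟩
  obtain ⟨a, ha, haq', haq⟩ := exists_isCompactElement_le_not_le (hq'.not_le_of_ne hq hne)
  obtain ⟨b, hb, hba, hbq'⟩ :=
    exists_isCompactElement_le_not_le fun h => (hq'.resid_le_iff ha).1 h haq'
  have htop := h a b ha hb (le_resid_iff.1 hba)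
  refine hp.1 (top_le_iff.1 (htop ▸ sup_le ?_ ?_))
  · exact ((hq.resid_le_iff ha).2 haq).trans hqp
  · exact ((hq'.resid_le_iff hb).2 hbq').trans hq'p

theorem mp_iff_radicalAnnihilatorsComaximal : MP C ↔ RadicalAnnihilatorsComaximal C :=
  ⟨.of_mp, RadicalAnnihilatorsComaximal.mp⟩

theorem RadicalAnnihilatorsComaximal.sup_resid_eq (h : RadicalAnnihilatorsComaximal C)
    {a b : C} (ha : IsCompactElement a) (hb : IsCompactElement b) :
    resid a (radical ⊥) ⊔ resid b (radical ⊥) = resid (comm a b) (radical ⊥) := by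
  rw [resid_comm_radical_bot]
  refine le_antisymm (sup_le (resid_radical_bot_anti inf_le_left)
    (resid_radical_bot_anti inf_le_right)) (le_iff_compact_le_imp.2 fun c hc hcab => ?_)
  have habc : a ⊓ c ⊓ b ≤ radical ⊥ := by
    rw [inf_right_comm]; exact le_resid_radical_bot_iff.1 hcab
  have htop := h (comm a c) b (comm_isCompact a c ha hc) hb
    (comm_le_radical_bot_iff.2 (comm_inf_le_radical_bot_iff.2 habc))
  have hac : a ⊓ c ⊓ resid (comm a c) (radical ⊥) ≤ radical ⊥ :=
    comm_inf_le_radical_bot_iff.1 (le_resid_radical_bot_iff.1 le_rfl)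
  have hca : comm c (resid (comm a c) (radical ⊥)) ≤ resid a (radical ⊥) := by
    rw [le_resid_radical_bot_iff, inf_comm, comm_inf_le_radical_bot_iff]
    exact (le_of_eq (by ac_rfl)).trans hac
  calc c = comm c ⊤ := (comm_top c).symm
    _ = comm c (resid (comm a c) (radical ⊥)) ⊔ comm c (resid b (radical ⊥)) := by
      rw [← htop, comm_sup_right]
    _ ≤ resid a (radical ⊥) ⊔ resid b (radical ⊥) :=
      sup_le_sup hca ((comm_le_inf _ _).trans inf_le_right)

theorem radicalAnnihilatorsComaximal_iff_sup_resid_eq :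
    RadicalAnnihilatorsComaximal C ↔ ∀ a b : C, IsCompactElement a → IsCompactElement b →
      resid a (radical ⊥) ⊔ resid b (radical ⊥) = resid (comm a b) (radical ⊥) := by
  refine ⟨fun h a b ha hb => h.sup_resid_eq ha hb, fun h a b ha hb hab => ?_⟩
  rw [h a b ha hb, eq_top_iff, le_resid_iff, comm_top]
  exact hab

theorem radicalAnnihilatorsComaximal_iff_isWPure :
    RadicalAnnihilatorsComaximal C ↔
      ∀ a : C, IsCompactElement a → IsWPure (resid a (radical ⊥)) :=
  ⟨fun h a ha b hb hba => h a b ha hb (le_resid_iff.1 hba),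
    fun h a b ha hb hab => h a ha b hb (le_resid_iff.2 hab)⟩

theorem statement13 :
    (MP C ↔ ∀ a b : C, IsCompactElement a → IsCompactElement b →
      comm a b ≤ radical (⊥ : C) →
        resid a (radical ⊥) ⊔ resid b (radical ⊥) = ⊤) ∧
    (MP C ↔ ∀ a b : C, IsCompactElement a → IsCompactElement b →
      resid a (radical ⊥) ⊔ resid b (radical ⊥) = resid (comm a b) (radical ⊥)) ∧
    (MP C ↔ ∀ a : C, IsCompactElement a → IsWPure (resid a (radical ⊥))) :=
  ⟨mp_iff_radicalAnnihilatorsComaximal,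
    mp_iff_radicalAnnihilatorsComaximal.trans radicalAnnihilatorsComaximal_iff_sup_resid_eq,
    mp_iff_radicalAnnihilatorsComaximal.trans radicalAnnihilatorsComaximal_iff_isWPure⟩

end CommutatorLattice
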